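/- arXiv:1904.12061 — 9 statements merged into one kernel-verified Lean document; each statement's English description precedes it below -/
import Mathlib

section
/- Let 1 ≤ i ≤ j ≤ n and let h = I′(i,j). If h > i then β(i,j) = max{d_C(i,j,h), d_C(i,j,h−1)}, and if h = i then β(i,j) = d_C(i,j,h). In other words, the maximum of d_C(i,j,·) over [i,j] is attained at index I′(i,j) or at index I′(i,j) − 1. -/
/-- Path distance along the path: `d_P(i,j) = Σ_{k=i}^{j-1} dist(v_k, v_{k+1})`. -/
noncomputable def dP {X : Type*} [MetricSpace X] (v : ℕ → X) (i j : ℕ) : ℝ :=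
  ∑ k ∈ Finset.Ico i j, dist (v k) (v (k + 1))

/-- `d_C(i,j,k) = min{d_P(i,k), dist(v_i,v_j) + d_P(k,j)}`: the distance from `v_i`
to `v_k` in the cycle formed by the subpath from `v_i` to `v_j` together with a new
edge `v_i v_j` of length `dist(v_i,v_j)`. -/
noncomputable def dC {X : Type*} [MetricSpace X] (v : ℕ → X) (i j k : ℕ) : ℝ :=
  min (dP v i k) (dist (v i) (v j) + dP v k j)

/-- `β(i,j) = max_{i ≤ k ≤ j} d_C(i,j,k)`. -/
noncomputable def beta {X : Type*} [MetricSpace X] (v : ℕ → X) (i j : ℕ) : ℝ :=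
  ⨆ k : Finset.Icc i j, dC v i j (k : ℕ)

/-- `h = I′(i,j)`: `h` is the smallest `k ∈ [i,j]` with
`d_P(i,k) ≥ dist(v_i,v_j) + d_P(k,j)`. -/
def IsIp {X : Type*} [MetricSpace X] (v : ℕ → X) (i j h : ℕ) : Prop :=
  h ∈ Finset.Icc i j ∧ dP v i h ≥ dist (v i) (v j) + dP v h j ∧
    ∀ k ∈ Finset.Icc i j, dP v i k ≥ dist (v i) (v j) + dP v k j → h ≤ k

lemma dP_nonneg {X : Type*} [MetricSpace X] (v : ℕ → X) (i j : ℕ) : 0 ≤ dP v i j :=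
  Finset.sum_nonneg fun _ _ => dist_nonneg

lemma dP_add {X : Type*} [MetricSpace X] (v : ℕ → X) {i k j : ℕ} (h1 : i ≤ k) (h2 : k ≤ j) :
    dP v i k + dP v k j = dP v i j :=
  Finset.sum_Ico_consecutive _ h1 h2

/-- Let `1 ≤ i ≤ j ≤ n` and let `h = I′(i,j)`. If `h > i` then
`β(i,j) = max{d_C(i,j,h), d_C(i,j,h−1)}`, and if `h = i` then `β(i,j) = d_C(i,j,h)`:
the maximum of `d_C(i,j,·)` over `[i,j]` is attained at `I′(i,j)` or `I′(i,j) − 1`. -/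
theorem stmt3 {X : Type*} [MetricSpace X] (n : ℕ) (hn : 1 ≤ n) (v : ℕ → X)
    (hv : Set.InjOn v (Set.Icc 1 n))
    (i j h : ℕ) (hi : 1 ≤ i) (hij : i ≤ j) (hj : j ≤ n)
    (hh : IsIp v i j h) :
    (i < h → beta v i j = max (dC v i j h) (dC v i j (h - 1))) ∧
    (h = i → beta v i j = dC v i j h) := by
  obtain ⟨hmem, hge, hmin⟩ := hh
  rw [Finset.mem_Icc] at hmem
  obtain ⟨hih, hhj⟩ := hmem
  haveI : Nonempty (Finset.Icc i j) := ⟨⟨h, Finset.mem_Icc.2 ⟨hih, hhj⟩⟩⟩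
  have hbdd : BddAbove (Set.range fun k : Finset.Icc i j => dC v i j (k : ℕ)) :=
    (Set.finite_range _).bddAbove
  -- for k ≥ h, dC k ≤ dC h
  have key1 : ∀ k, h ≤ k → k ≤ j → dC v i j k ≤ dC v i j h := by
    intro k hk1 hk2
    have h1 : dP v h k + dP v k j = dP v h j := dP_add v hk1 hk2
    have h2 : dC v i j h = dist (v i) (v j) + dP v h j := min_eq_right hge
    have h3 : dC v i j k ≤ dist (v i) (v j) + dP v k j := min_le_right _ _
    have h4 := dP_nonneg v h k
    linarith
  -- for k < h, dC k = dP i k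
  have key2 : ∀ k, i ≤ k → k < h → dC v i j k = dP v i k := by
    intro k hk1 hk2
    have hkj : k ≤ j := le_trans (le_of_lt hk2) hhj
    have hnot : ¬ (dP v i k ≥ dist (v i) (v j) + dP v k j) := by
      intro hc
      exact absurd (hmin k (Finset.mem_Icc.2 ⟨hk1, hkj⟩) hc) (not_le.2 hk2)
    exact min_eq_left (le_of_lt (lt_of_not_ge hnot))
  constructor
  · intro hlt
    have hih1 : i ≤ h - 1 := Nat.le_sub_one_of_lt hlt
    have hh1j : h - 1 ≤ j := le_trans (Nat.sub_le _ _) hhj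
    have hh1h : h - 1 < h := Nat.sub_lt (lt_of_le_of_lt (Nat.zero_le _) hlt) one_pos
    apply le_antisymm
    · apply ciSup_le
      rintro ⟨k, hk⟩
      rw [Finset.mem_Icc] at hk
      rcases lt_or_ge k h with hk' | hk'
      · refine le_max_of_le_right ?_
        rw [key2 k hk.1 hk', key2 (h - 1) hih1 hh1h]
        have : dP v i k + dP v k (h - 1) = dP v i (h - 1) :=
          dP_add v hk.1 (Nat.le_sub_one_of_lt hk')
        have := dP_nonneg v k (h - 1)
        linarith
      · exact le_max_of_le_left (key1 k hk' hk.2)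
    · apply max_le
      · exact le_ciSup hbdd ⟨h, Finset.mem_Icc.2 ⟨hih, hhj⟩⟩
      · exact le_ciSup hbdd ⟨h - 1, Finset.mem_Icc.2 ⟨hih1, hh1j⟩⟩
  · intro heq
    subst heq
    apply le_antisymm
    · apply ciSup_le
      rintro ⟨k, hk⟩
      rw [Finset.mem_Icc] at hk
      exact key1 k hk.1 hk.2
    · exact le_ciSup hbdd ⟨h, Finset.mem_Icc.2 ⟨hih, hhj⟩⟩
end

section
/- For all 1 ≤ i ≤ j ≤ n−1, I′(i,j) ≤ I′(i,j+1); that is, for fixed i the index I′(i,j) is monotonically non-decreasing in j. -/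
/-- For all `1 ≤ i ≤ j ≤ n−1`, `I′(i,j) ≤ I′(i,j+1)`: for fixed `i` the index
`I′(i,j)` is monotonically non-decreasing in `j`. -/
theorem stmt4 {X : Type*} [MetricSpace X] (n : ℕ) (hn : 1 ≤ n) (v : ℕ → X)
    (hv : Set.InjOn v (Set.Icc 1 n))
    (I' : ℕ → ℕ → ℕ)
    (hI' : ∀ i j, 1 ≤ i → i ≤ j → j ≤ n → IsIp v i j (I' i j)) :
    ∀ i j, 1 ≤ i → i ≤ j → j + 1 ≤ n → I' i j ≤ I' i (j + 1) := by
  intro i j hi hij hjn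
  obtain ⟨hmem1, _, hmin1⟩ := hI' i j hi hij (by omega)
  obtain ⟨hmem2, hge2, _⟩ := hI' i (j + 1) hi (by omega) hjn
  simp only [Finset.mem_Icc] at hmem1 hmem2
  by_cases hc : I' i (j + 1) ≤ j
  · apply hmin1 _ (Finset.mem_Icc.mpr ⟨hmem2.1, hc⟩)
    have hsplit : dP v (I' i (j + 1)) (j + 1)
        = dP v (I' i (j + 1)) j + dist (v j) (v (j + 1)) := by
      unfold dP
      rw [Finset.sum_Ico_succ_top hc]
    have htri := dist_triangle (v i) (v (j + 1)) (v j)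
    rw [dist_comm (v (j + 1)) (v j)] at htri
    rw [hsplit] at hge2
    linarith
  · omega
end

section
/- For all 1 ≤ i < j ≤ n, I′(i,j) ≤ I′(i+1,j); that is, for fixed j the index I′(i,j) is monotonically non-decreasing in i. -/
/-- For all `1 ≤ i < j ≤ n`, `I′(i,j) ≤ I′(i+1,j)`: for fixed `j` the index
`I′(i,j)` is monotonically non-decreasing in `i`. -/
theorem stmt5 {X : Type*} [MetricSpace X] (n : ℕ) (hn : 1 ≤ n) (v : ℕ → X)
    (hv : Set.InjOn v (Set.Icc 1 n))
    (I' : ℕ → ℕ → ℕ)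
    (hI' : ∀ i j, 1 ≤ i → i ≤ j → j ≤ n → IsIp v i j (I' i j)) :
    ∀ i j, 1 ≤ i → i < j → j ≤ n → I' i j ≤ I' (i + 1) j := by
  intro i j hi hij hj
  obtain ⟨hmem, hge, hmin⟩ := hI' i j hi hij.le hj
  obtain ⟨hmem', hge', _⟩ := hI' (i + 1) j (by omega) (by omega) hj
  set h' := I' (i + 1) j with hh'
  simp only [Finset.mem_Icc] at hmem'
  apply hmin h' (Finset.mem_Icc.mpr ⟨by omega, hmem'.2⟩)
  have hsplit : dP v i h' = dist (v i) (v (i + 1)) + dP v (i + 1) h' := by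
    rw [dP, Finset.sum_eq_sum_Ico_succ_bot (by omega : i < h')]
    rfl
  have htri : dist (v i) (v j) ≤ dist (v i) (v (i + 1)) + dist (v (i + 1)) (v j) :=
    dist_triangle _ _ _
  rw [hsplit]
  linarith
end

section
/- For all 1 ≤ i ≤ j ≤ n−1, β(i,j) ≤ β(i,j+1); that is, for fixed i the quantity β(i,j) is monotonically non-decreasing in j. -/

lemma dC_mono {X : Type*} [MetricSpace X] (v : ℕ → X) (i j k : ℕ) (hk : k ≤ j) :
    dC v i j k ≤ dC v i (j + 1) k := by
  unfold dC
  apply min_le_min le_rfl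
  have hsum : dP v k (j + 1) = dP v k j + dist (v j) (v (j + 1)) := by
    unfold dP
    rw [Finset.sum_Ico_succ_top hk]
  have htri : dist (v i) (v j) ≤ dist (v i) (v (j + 1)) + dist (v (j + 1)) (v j) :=
    dist_triangle _ _ _
  rw [hsum]
  rw [dist_comm (v (j+1)) (v j)] at htri
  linarith

/-- For all `1 ≤ i ≤ j ≤ n−1`, `β(i,j) ≤ β(i,j+1)`: for fixed `i` the quantity
`β(i,j)` is monotonically non-decreasing in `j`. -/
theorem stmt7 {X : Type*} [MetricSpace X] (n : ℕ) (hn : 1 ≤ n) (v : ℕ → X)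
    (hv : Set.InjOn v (Set.Icc 1 n))
    (i j : ℕ) (hi : 1 ≤ i) (hij : i ≤ j) (hj : j + 1 ≤ n) :
    beta v i j ≤ beta v i (j + 1) := by
  have hne : (Finset.Icc i j).Nonempty := Finset.nonempty_Icc.mpr hij
  have : Nonempty (Finset.Icc i j) := hne.to_subtype
  unfold beta
  apply ciSup_le
  intro k
  have hk := Finset.mem_Icc.mp k.2
  have h1 : dC v i j (k : ℕ) ≤ dC v i (j + 1) (k : ℕ) := dC_mono v i j k hk.2
  refine h1.trans ?_
  have hmem : (k : ℕ) ∈ Finset.Icc i (j + 1) :=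
    Finset.mem_Icc.mpr ⟨hk.1, hk.2.trans (Nat.le_succ j)⟩
  have hbdd : BddAbove (Set.range fun k : Finset.Icc i (j + 1) => dC v i (j + 1) (k : ℕ)) :=
    (Set.finite_range _).bddAbove
  exact le_ciSup hbdd ⟨(k : ℕ), hmem⟩
end

section
/- For all indices with 1 ≤ i and i+1 ≤ m ≤ n, the following inequality holds: dist(v_{i+1}, v_m) + β(i, m) ≥ dist(v_i, v_m) + β(i+1, m). -/
/-- For all indices with `1 ≤ i` and `i+1 ≤ m ≤ n`:
`dist(v_{i+1}, v_m) + β(i, m) ≥ dist(v_i, v_m) + β(i+1, m)`. -/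
theorem stmt8 {X : Type*} [MetricSpace X] (n : ℕ) (hn : 1 ≤ n) (v : ℕ → X)
    (hv : Set.InjOn v (Set.Icc 1 n))
    (i m : ℕ) (hi : 1 ≤ i) (him : i + 1 ≤ m) (hm : m ≤ n) :
    dist (v (i + 1)) (v m) + beta v i m ≥ dist (v i) (v m) + beta v (i + 1) m := by
  have hne : (Finset.Icc (i + 1) m).Nonempty := by
    rw [Finset.nonempty_Icc]; exact him
  haveI : Nonempty (Finset.Icc (i + 1) m) := Finset.nonempty_coe_sort.mpr hne
  haveI : Nonempty (Finset.Icc i m) := Finset.nonempty_coe_sort.mpr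
    (by rw [Finset.nonempty_Icc]; omega)
  have hbdd : BddAbove (Set.range fun k : Finset.Icc i m => dC v i m (k : ℕ)) :=
    Set.Finite.bddAbove (Set.finite_range _)
  have key : dist (v i) (v m) + beta v (i + 1) m
      ≤ dist (v (i + 1)) (v m) + beta v i m := by
    have h1 : beta v (i + 1) m
        ≤ dist (v (i + 1)) (v m) + beta v i m - dist (v i) (v m) := by
      apply ciSup_le
      rintro ⟨k, hk⟩
      simp only [Finset.mem_Icc] at hk
      have hk' : (⟨k, by simp only [Finset.mem_Icc]; omega⟩ : Finset.Icc i m) = _ := rfl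
      have hsup : dC v i m k ≤ beta v i m :=
        le_ciSup hbdd (⟨k, by simp only [Finset.mem_Icc]; omega⟩ : Finset.Icc i m)
      have hsplit : dP v i k = dist (v i) (v (i + 1)) + dP v (i + 1) k := by
        unfold dP
        rw [Finset.sum_eq_sum_Ico_succ_bot (by omega : i < k)]
      have htri : dist (v i) (v m) ≤ dist (v i) (v (i + 1)) + dist (v (i + 1)) (v m) :=
        dist_triangle _ _ _
      have hmin : dist (v i) (v m) + dC v (i + 1) m k
          ≤ dist (v (i + 1)) (v m) + dC v i m k := by
        unfold dC
        rw [← min_add_add_left, ← min_add_add_left]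
        apply min_le_min
        · rw [hsplit]; linarith
        · linarith
      linarith
    linarith
  linarith
end

section
/- Suppose 1 ≤ i ≤ n−1, d_P(1,i) ≥ dist(v_i, v_n), and d_P(1,i) < d_P(i,n). Define j(i) as the smallest j ∈ [i,n] with d_P(1,i) ≥ dist(v_i,v_j) + d_P(j,n) (it exists since j = n qualifies). Then d_P(1,i+1) ≥ dist(v_{i+1}, v_n), so j(i+1), the smallest j ∈ [i+1,n] with d_P(1,i+1) ≥ dist(v_{i+1},v_j) + d_P(j,n), is well defined, and j(i+1) ≤ j(i). -/
/-- Suppose `1 ≤ i ≤ n−1`, `d_P(1,i) ≥ dist(v_i, v_n)`, and `d_P(1,i) < d_P(i,n)`.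
Let `j(i)` be the smallest `j ∈ [i,n]` with `d_P(1,i) ≥ dist(v_i,v_j) + d_P(j,n)`.
Then `d_P(1,i+1) ≥ dist(v_{i+1}, v_n)` (so `j(i+1)`, the smallest `j ∈ [i+1,n]` with
`d_P(1,i+1) ≥ dist(v_{i+1},v_j) + d_P(j,n)`, is well defined), and `j(i+1) ≤ j(i)`. -/
theorem stmt11 {X : Type*} [MetricSpace X] (n : ℕ) (hn : 1 ≤ n) (v : ℕ → X)
    (hv : Set.InjOn v (Set.Icc 1 n))
    (i : ℕ) (hi : 1 ≤ i) (hin : i + 1 ≤ n)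
    (h1 : dP v 1 i ≥ dist (v i) (v n)) (h2 : dP v 1 i < dP v i n)
    (ji : ℕ)
    (hji : ji ∈ Finset.Icc i n ∧ dP v 1 i ≥ dist (v i) (v ji) + dP v ji n ∧
      ∀ j ∈ Finset.Icc i n, dP v 1 i ≥ dist (v i) (v j) + dP v j n → ji ≤ j) :
    dP v 1 (i + 1) ≥ dist (v (i + 1)) (v n) ∧
    ∀ ji1 : ℕ,
      (ji1 ∈ Finset.Icc (i + 1) n ∧
        dP v 1 (i + 1) ≥ dist (v (i + 1)) (v ji1) + dP v ji1 n ∧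
        ∀ j ∈ Finset.Icc (i + 1) n,
          dP v 1 (i + 1) ≥ dist (v (i + 1)) (v j) + dP v j n → ji1 ≤ j) →
      ji1 ≤ ji := by
  obtain ⟨hji1, hji2, hji3⟩ := hji
  simp only [Finset.mem_Icc] at hji1
  have hsum : dP v 1 (i + 1) = dP v 1 i + dist (v i) (v (i + 1)) := by
    unfold dP
    rw [Finset.sum_Ico_succ_top hi]
  have hjine : i + 1 ≤ ji := by
    rcases Nat.lt_or_ge ji (i+1) with h | h
    · exfalso
      have : ji = i := le_antisymm (Nat.lt_succ_iff.mp h) hji1.1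
      rw [this] at hji2
      simp at hji2
      linarith
    · exact h
  constructor
  · rw [hsum]
    calc dist (v (i+1)) (v n) ≤ dist (v (i+1)) (v i) + dist (v i) (v n) := dist_triangle _ _ _
      _ ≤ dP v 1 i + dist (v i) (v (i+1)) := by rw [dist_comm]; linarith
  · intro ji1 ⟨_, _, hmin⟩
    apply hmin ji (Finset.mem_Icc.mpr ⟨hjine, hji1.2⟩)
    rw [hsum]
    calc dist (v (i+1)) (v ji) + dP v ji n
        ≤ dist (v (i+1)) (v i) + dist (v i) (v ji) + dP v ji n := by
          have := dist_triangle (v (i+1)) (v i) (v ji); linarith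
      _ ≤ dP v 1 i + dist (v i) (v (i+1)) := by rw [dist_comm (v (i+1))]; linarith
end

section
/- For each 1 ≤ i ≤ n, define k(i) as the smallest k ∈ [i,n] such that d_P(i,k) > d_P(1,i), with k(i) = n+1 if no such k exists; and if k(i) ≤ n define j(i) as the smallest j ∈ [k(i),n] such that d_P(k(i),j) > d_P(j,n), with j(i) = n+1 if no such j exists or if k(i) = n+1. Then for each 1 ≤ i ≤ n−1, k(i) ≤ k(i+1) and j(i) ≤ j(i+1). -/
/-- For each `1 ≤ i ≤ n`, define `k(i)` as the smallest `k ∈ [i,n]` with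
`d_P(i,k) > d_P(1,i)`, with `k(i) = n+1` if no such `k` exists; and if
`k(i) ≤ n`, define `j(i)` as the smallest `j ∈ [k(i),n]` with
`d_P(k(i),j) > d_P(j,n)`, with `j(i) = n+1` if no such `j` exists or if
`k(i) = n+1`. Then for each `1 ≤ i ≤ n−1`, `k(i) ≤ k(i+1)` and `j(i) ≤ j(i+1)`. -/
theorem stmt14 {X : Type*} [MetricSpace X] (n : ℕ) (hn : 1 ≤ n) (v : ℕ → X)
    (hv : Set.InjOn v (Set.Icc 1 n))
    (kf jf : ℕ → ℕ)
    (hkf : ∀ i, 1 ≤ i → i ≤ n →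
      (kf i ∈ Finset.Icc i n ∧ dP v 1 i < dP v i (kf i) ∧
        ∀ k ∈ Finset.Icc i n, dP v 1 i < dP v i k → kf i ≤ k) ∨
      (kf i = n + 1 ∧ ∀ k ∈ Finset.Icc i n, ¬ dP v 1 i < dP v i k))
    (hjf : ∀ i, 1 ≤ i → i ≤ n →
      (kf i ≤ n →
        (jf i ∈ Finset.Icc (kf i) n ∧ dP v (jf i) n < dP v (kf i) (jf i) ∧
          ∀ j ∈ Finset.Icc (kf i) n, dP v j n < dP v (kf i) j → jf i ≤ j) ∨
        (jf i = n + 1 ∧ ∀ j ∈ Finset.Icc (kf i) n, ¬ dP v j n < dP v (kf i) j)) ∧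
      (kf i = n + 1 → jf i = n + 1)) :
    ∀ i, 1 ≤ i → i + 1 ≤ n → kf i ≤ kf (i + 1) ∧ jf i ≤ jf (i + 1) := by
  have dP_nonneg : ∀ a b : ℕ, 0 ≤ dP v a b := fun a b =>
    Finset.sum_nonneg fun _ _ => dist_nonneg
  have dP_split : ∀ a b c : ℕ, a ≤ b → b ≤ c → dP v a c = dP v a b + dP v b c := by
    intro a b c hab hbc
    exact (Finset.sum_Ico_consecutive _ hab hbc).symm
  intro i hi1 hin
  have hi1n : 1 ≤ i + 1 := Nat.le_succ_of_le hi1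
  have hiin : i ≤ n := le_trans (Nat.le_succ i) hin
  have key : ∀ k, i + 1 ≤ k → dP v 1 (i + 1) < dP v (i + 1) k → dP v 1 i < dP v i k := by
    intro k hk h
    have h1 : dP v 1 (i + 1) = dP v 1 i + dP v i (i + 1) := dP_split _ _ _ hi1 (Nat.le_succ i)
    have h2 : dP v i k = dP v i (i + 1) + dP v (i + 1) k := dP_split _ _ _ (Nat.le_succ i) hk
    have := dP_nonneg i (i + 1)
    linarith
  have hk : kf i ≤ kf (i + 1) := by
    rcases hkf (i + 1) hi1n hin with ⟨hmem, hlt, _⟩ | ⟨heq, _⟩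
    · rw [Finset.mem_Icc] at hmem
      have hK' : dP v 1 i < dP v i (kf (i + 1)) := key _ hmem.1 hlt
      have hmem' : kf (i + 1) ∈ Finset.Icc i n :=
        Finset.mem_Icc.mpr ⟨le_trans (Nat.le_succ i) hmem.1, hmem.2⟩
      rcases hkf i hi1 hiin with ⟨_, _, hmin'⟩ | ⟨_, hnone'⟩
      · exact hmin' _ hmem' hK'
      · exact absurd hK' (hnone' _ hmem')
    · rw [heq]
      rcases hkf i hi1 hiin with ⟨hm, _, _⟩ | ⟨heq', _⟩
      · rw [Finset.mem_Icc] at hm; omega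
      · omega
  refine ⟨hk, ?_⟩
  by_cases hJ' : jf (i + 1) ≤ n
  · have hK'n : kf (i + 1) ≤ n := by
      rcases hkf (i + 1) hi1n hin with ⟨hm, _, _⟩ | ⟨heq, _⟩
      · exact (Finset.mem_Icc.mp hm).2
      · have := (hjf (i + 1) hi1n hin).2 heq; omega
    have hKn : kf i ≤ n := le_trans hk hK'n
    rcases (hjf (i + 1) hi1n hin).1 hK'n with ⟨hm, hlt, _⟩ | ⟨heq, _⟩
    · obtain ⟨hKJ, hJn⟩ := Finset.mem_Icc.mp hm
      have hlt' : dP v (jf (i + 1)) n < dP v (kf i) (jf (i + 1)) := by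
        have hsplit : dP v (kf i) (jf (i + 1)) =
            dP v (kf i) (kf (i + 1)) + dP v (kf (i + 1)) (jf (i + 1)) :=
          dP_split _ _ _ hk hKJ
        have := dP_nonneg (kf i) (kf (i + 1))
        linarith
      have hmem' : jf (i + 1) ∈ Finset.Icc (kf i) n :=
        Finset.mem_Icc.mpr ⟨le_trans hk hKJ, hJn⟩
      rcases (hjf i hi1 hiin).1 hKn with ⟨_, _, hmin⟩ | ⟨_, hnone⟩
      · exact hmin _ hmem' hlt'
      · exact absurd hlt' (hnone _ hmem')
    · omega
  · push_neg at hJ'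
    have : jf i ≤ n + 1 := by
      rcases hkf i hi1 hiin with ⟨hm, _, _⟩ | ⟨heq, _⟩
      · have hKn := (Finset.mem_Icc.mp hm).2
        rcases (hjf i hi1 hiin).1 hKn with ⟨hm', _, _⟩ | ⟨heq', _⟩
        · have := (Finset.mem_Icc.mp hm').2; omega
        · omega
      · have := (hjf i hi1 hiin).2 heq; omega
    omega
end

section
/- Assume n ≥ 4. For each 2 ≤ k ≤ n−2, define i(k) as the largest i ∈ [1,k] with d_P(1,i) < d_P(i,k) (it exists since i = 1 qualifies, as d_P(1,1) = 0 < d_P(1,k) because the vertices are distinct), and define j(k) as the smallest j ∈ [k+1,n] with d_P(j,n) < d_P(k+1,j) (it exists since j = n qualifies, as d_P(n,n) = 0 < d_P(k+1,n)). Then for each 2 ≤ k ≤ n−3, i(k) ≤ i(k+1) and j(k) ≤ j(k+1). -/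
/-- Assume `n ≥ 4`. For each `2 ≤ k ≤ n−2`, define `i(k)` as the largest
`i ∈ [1,k]` with `d_P(1,i) < d_P(i,k)` and `j(k)` as the smallest `j ∈ [k+1,n]`
with `d_P(j,n) < d_P(k+1,j)`. Then for each `2 ≤ k ≤ n−3`, `i(k) ≤ i(k+1)` and
`j(k) ≤ j(k+1)`. -/
theorem stmt15 {X : Type*} [MetricSpace X] (n : ℕ) (hn : 4 ≤ n) (v : ℕ → X)
    (hv : Set.InjOn v (Set.Icc 1 n))
    (fi fj : ℕ → ℕ)
    (hfi : ∀ k, 2 ≤ k → k ≤ n - 2 →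
      fi k ∈ Finset.Icc 1 k ∧ dP v 1 (fi k) < dP v (fi k) k ∧
        ∀ i ∈ Finset.Icc 1 k, dP v 1 i < dP v i k → i ≤ fi k)
    (hfj : ∀ k, 2 ≤ k → k ≤ n - 2 →
      fj k ∈ Finset.Icc (k + 1) n ∧ dP v (fj k) n < dP v (k + 1) (fj k) ∧
        ∀ j ∈ Finset.Icc (k + 1) n, dP v j n < dP v (k + 1) j → fj k ≤ j) :
    ∀ k, 2 ≤ k → k ≤ n - 3 → fi k ≤ fi (k + 1) ∧ fj k ≤ fj (k + 1) := by
  intro k hk2 hk3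
  have hmono : ∀ i j j' : ℕ, j ≤ j' → dP v i j ≤ dP v i j' := by
    intro i j j' h
    apply Finset.sum_le_sum_of_subset_of_nonneg
    · exact Finset.Ico_subset_Ico le_rfl h
    · intro _ _ _; exact dist_nonneg
  have hmono' : ∀ i i' j : ℕ, i ≤ i' → dP v i' j ≤ dP v i j := by
    intro i i' j h
    apply Finset.sum_le_sum_of_subset_of_nonneg
    · exact Finset.Ico_subset_Ico h le_rfl
    · intro _ _ _; exact dist_nonneg
  have hkn2 : k ≤ n - 2 := le_trans hk3 (by omega)
  have hk1n2 : k + 1 ≤ n - 2 := by omega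
  obtain ⟨hik, hik2, _⟩ := hfi k hk2 hkn2
  obtain ⟨_, _, hikmax⟩ := hfi (k + 1) (by omega) hk1n2
  obtain ⟨_, _, hjkmin⟩ := hfj k hk2 hkn2
  obtain ⟨hjk1, hjk12, _⟩ := hfj (k + 1) (by omega) hk1n2
  constructor
  · apply hikmax
    · simp only [Finset.mem_Icc] at hik ⊢
      omega
    · exact lt_of_lt_of_le hik2 (hmono _ _ _ (Nat.le_succ k))
  · apply hjkmin
    · simp only [Finset.mem_Icc] at hjk1 ⊢
      omega
    · exact lt_of_lt_of_le hjk12 (hmono' _ _ _ (Nat.le_succ (k + 1)))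
end

section
/- Let 1 ≤ i < j ≤ n and let S = d_P(i,j) + dist(v_i,v_j). Then there exists k ∈ [i, j−1] with d_P(i,k) ≤ S/2 ≤ d_P(i,k+1), and for any such k, β(i,j) = max{d_P(i,k), dist(v_i,v_j) + d_P(k+1,j)}. In particular, if d_P(i,k) = S/2 for some k ∈ [i,j], then β(i,j) = S/2, i.e., β(i,j) equals half the total length of the cycle formed by the subpath from v_i to v_j and the new edge v_i v_j. -/
lemma dP_mono {X : Type*} [MetricSpace X] (v : ℕ → X) {i k l : ℕ} (h1 : i ≤ k) (h2 : k ≤ l) :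
    dP v i k ≤ dP v i l := by
  have := dP_add v h1 h2
  have := dP_nonneg v k l
  linarith

lemma dist_le_dP {X : Type*} [MetricSpace X] (v : ℕ → X) {i j : ℕ} (h : i ≤ j) :
    dist (v i) (v j) ≤ dP v i j := dist_le_Ico_sum_dist v h

/-- Let `1 ≤ i < j ≤ n` and let `S = d_P(i,j) + dist(v_i,v_j)` (the total length of
the cycle formed by the subpath from `v_i` to `v_j` and the new edge `v_i v_j`).
Then there exists `k ∈ [i, j−1]` with `d_P(i,k) ≤ S/2 ≤ d_P(i,k+1)`, and for any
such `k`, `β(i,j) = max{d_P(i,k), dist(v_i,v_j) + d_P(k+1,j)}`. In particular, if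
`d_P(i,k) = S/2` for some `k ∈ [i,j]`, then `β(i,j) = S/2`. -/
theorem stmt16 {X : Type*} [MetricSpace X] (n : ℕ) (hn : 1 ≤ n) (v : ℕ → X)
    (hv : Set.InjOn v (Set.Icc 1 n))
    (i j : ℕ) (hi : 1 ≤ i) (hij : i < j) (hj : j ≤ n) :
    (∃ k ∈ Finset.Icc i (j - 1),
      dP v i k ≤ (dP v i j + dist (v i) (v j)) / 2 ∧
      (dP v i j + dist (v i) (v j)) / 2 ≤ dP v i (k + 1)) ∧
    (∀ k ∈ Finset.Icc i (j - 1),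
      dP v i k ≤ (dP v i j + dist (v i) (v j)) / 2 →
      (dP v i j + dist (v i) (v j)) / 2 ≤ dP v i (k + 1) →
      beta v i j = max (dP v i k) (dist (v i) (v j) + dP v (k + 1) j)) ∧
    (∀ k ∈ Finset.Icc i j, dP v i k = (dP v i j + dist (v i) (v j)) / 2 →
      beta v i j = (dP v i j + dist (v i) (v j)) / 2) := by
  set S : ℝ := dP v i j + dist (v i) (v j) with hS
  -- positivity of the distance (injectivity)
  have hvij : v i ≠ v j := fun h =>
    absurd (hv ⟨hi, le_trans hij.le hj⟩ ⟨le_trans hi hij.le, hj⟩ h) hij.ne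
  have hdpos : 0 < dist (v i) (v j) := dist_pos.mpr hvij
  have hdle : dist (v i) (v j) ≤ dP v i j := dist_le_dP v hij.le
  have hSpos : 0 < S := by have := dP_nonneg v i j; simp only [hS]; linarith
  have hii : dP v i i = 0 := by simp [dP]
  -- nonemptiness / boundedness for the sup
  haveI hne : Nonempty (Finset.Icc i j) :=
    ⟨⟨i, Finset.mem_Icc.mpr ⟨le_refl i, hij.le⟩⟩⟩
  have hbdd : BddAbove (Set.range fun k : Finset.Icc i j => dC v i j (k : ℕ)) :=
    Set.Finite.bddAbove (Set.finite_range _)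
  -- generic upper bound : each dC ≤ S/2
  have hdC_le : ∀ l, i ≤ l → l ≤ j → dC v i j l ≤ S / 2 := by
    intro l h1 h2
    have hadd := dP_add v h1 h2
    have h3 : dC v i j l ≤ dP v i l := min_le_left _ _
    have h4 : dC v i j l ≤ dist (v i) (v j) + dP v l j := min_le_right _ _
    simp only [hS]; linarith
  -- Part 1: existence of the crossing index
  have part1 : ∃ k ∈ Finset.Icc i (j - 1),
      dP v i k ≤ S / 2 ∧ S / 2 ≤ dP v i (k + 1) := by
    have hex : ∃ m, S / 2 ≤ dP v i m := ⟨j, by simp only [hS]; linarith⟩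
    classical
    set m := Nat.find hex with hm
    have hspec : S / 2 ≤ dP v i m := Nat.find_spec hex
    have hmj : m ≤ j := Nat.find_min' hex (by simp only [hS]; linarith)
    have hmi : i < m := by
      by_contra h
      push_neg at h
      have : dP v i m = 0 := by
        unfold dP
        rw [Finset.Ico_eq_empty (by omega)]
        simp
      rw [this] at hspec; linarith
    refine ⟨m - 1, Finset.mem_Icc.mpr ⟨by omega, by omega⟩, ?_, ?_⟩
    · have hmin : ¬ S / 2 ≤ dP v i (m - 1) := Nat.find_min hex (by omega)
      linarith [not_le.mp hmin]
    · have : m - 1 + 1 = m := by omega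
      rw [this]; exact hspec
  refine ⟨part1, ?_, ?_⟩
  · -- Part 2
    intro k hk hk1 hk2
    rw [Finset.mem_Icc] at hk
    have hik : i ≤ k := hk.1
    have hkj : k + 1 ≤ j := by omega
    have hkmem : k ∈ Finset.Icc i j := Finset.mem_Icc.mpr ⟨hik, by omega⟩
    have hk1mem : k + 1 ∈ Finset.Icc i j := Finset.mem_Icc.mpr ⟨by omega, hkj⟩
    have haddk := dP_add v hik (le_of_lt (by omega : k < j))
    have haddk1 := dP_add v (by omega : i ≤ k + 1) hkj
    -- value at k
    have hvk : dC v i j k = dP v i k := by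
      apply min_eq_left
      simp only [hS] at hk1; linarith
    have hvk1 : dC v i j (k + 1) = dist (v i) (v j) + dP v (k + 1) j := by
      apply min_eq_right
      simp only [hS] at hk2; linarith
    apply le_antisymm
    · apply ciSup_le
      rintro ⟨l, hl⟩
      rw [Finset.mem_Icc] at hl
      rcases le_or_gt l k with h | h
      · calc dC v i j l ≤ dP v i l := min_le_left _ _
          _ ≤ dP v i k := dP_mono v hl.1 h
          _ ≤ _ := le_max_left _ _
      · have hkl : k + 1 ≤ l := h
        calc dC v i j l ≤ dist (v i) (v j) + dP v l j := min_le_right _ _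
          _ ≤ dist (v i) (v j) + dP v (k + 1) j := by
              have := dP_add v hkl hl.2
              have := dP_nonneg v (k + 1) l
              linarith
          _ ≤ _ := le_max_right _ _
    · apply max_le
      · calc dP v i k = dC v i j k := hvk.symm
          _ ≤ _ := le_ciSup hbdd (⟨k, hkmem⟩ : Finset.Icc i j)
      · calc dist (v i) (v j) + dP v (k + 1) j = dC v i j (k + 1) := hvk1.symm
          _ ≤ _ := le_ciSup hbdd (⟨k + 1, hk1mem⟩ : Finset.Icc i j)
  · -- Part 3
    intro k hk hkeq
    rw [Finset.mem_Icc] at hk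
    have hadd := dP_add v hk.1 hk.2
    have hvk : dC v i j k = S / 2 := by
      have h1 : dP v i k = S / 2 := hkeq
      have h2 : dist (v i) (v j) + dP v k j = S / 2 := by simp only [hS] at h1 ⊢; linarith
      unfold dC; rw [h1, h2, min_self]
    apply le_antisymm
    · apply ciSup_le
      rintro ⟨l, hl⟩
      rw [Finset.mem_Icc] at hl
      exact hdC_le l hl.1 hl.2
    · calc (S : ℝ) / 2 = dC v i j k := hvk.symm
        _ ≤ _ := le_ciSup hbdd (⟨k, Finset.mem_Icc.mpr hk⟩ : Finset.Icc i j)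
end
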